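/- Let 𝒜 be a unital ∗-algebra over ℂ and let Φ : 𝒜 → 𝒜 be a nonlinear ⋄-derivation such that Φ(I/2) and Φ(iI/2) are self-adjoint. Then Φ(iA) = iΦ(A) for every A ∈ 𝒜. -/

import Mathlib

/-!
Write `P = ½·I` and `Q = (i/2)·I`. Since `P ⋄ Q = Q`, the derivation rule together with the
self-adjointness of `Φ(P)` and `Φ(Q)` gives `Φ(Q) = iΦ(P)`; self-adjointness of both sides then
forces `Φ(P) = Φ(Q) = 0`. The scalar identities `P ⋄ iA = A ⋄ Q` and `iA ⋄ Q = A ⋄ P` are then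
transported by `Φ` to two linear relations between `Φ(iA)`, `Φ(A)` and their adjoints, whose
combination eliminates the adjoints and leaves `Φ(iA) = iΦ(A)`.
-/

def diamond {𝒜 : Type*} [Mul 𝒜] [Sub 𝒜] [Star 𝒜] (A B : 𝒜) : 𝒜 := star A * B - star B * A

infixl:70 " ⋄ " => diamond

section Ring

variable {𝒜 : Type*} [Ring 𝒜] [StarRing 𝒜]

@[simp] lemma zero_diamond (B : 𝒜) : 0 ⋄ B = 0 := by simp [diamond]

@[simp] lemma diamond_zero (A : 𝒜) : A ⋄ 0 = 0 := by simp [diamond]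

def IsDiamondDerivation (Φ : 𝒜 → 𝒜) : Prop :=
  ∀ A B, Φ (A ⋄ B) = Φ A ⋄ B + A ⋄ Φ B

namespace IsDiamondDerivation

variable {Φ : 𝒜 → 𝒜} {A B : 𝒜}

lemma map_diamond_of_map_left_eq_zero (hΦ : IsDiamondDerivation Φ) (hA : Φ A = 0) :
    Φ (A ⋄ B) = A ⋄ Φ B := by
  simp [hΦ A B, hA]

lemma map_diamond_of_map_right_eq_zero (hΦ : IsDiamondDerivation Φ) (hB : Φ B = 0) :
    Φ (A ⋄ B) = Φ A ⋄ B := by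
  simp [hΦ A B, hB]

end IsDiamondDerivation

end Ring

section Scalar

variable {R 𝒜 : Type*} [CommRing R] [StarRing R] [Ring 𝒜] [StarRing 𝒜] [Algebra R 𝒜]
  [StarModule R 𝒜]

lemma smul_one_diamond (c : R) (B : 𝒜) : (c • 1 : 𝒜) ⋄ B = star c • B - c • star B := by
  simp [diamond, star_smul]

lemma diamond_smul_one (A : 𝒜) (c : R) : A ⋄ (c • 1 : 𝒜) = c • star A - star c • A := by
  simp [diamond, star_smul]

end Scalar

namespace Complex

lemma star_I : star I = -I := conj_I

lemma star_half : star (1 / 2 : ℂ) = 1 / 2 := by simp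

lemma star_I_div_two : star (I / 2) = -(I / 2) := by simp [neg_div]

end Complex

section ComplexStarAlgebra

open Complex

lemma eq_zero_of_I_smul_eq_neg {M : Type*} [AddCommGroup M] [Module ℂ M] {x : M}
    (h : I • x = -(I • x)) : x = 0 := by
  rw [eq_neg_iff_add_eq_zero, ← two_smul ℂ, smul_smul, smul_eq_zero] at h
  exact h.resolve_left (by simp)

variable {𝒜 : Type*} [Ring 𝒜] [StarRing 𝒜] [Algebra ℂ 𝒜] [StarModule ℂ 𝒜]

lemma half_diamond_I_smul (A : 𝒜) :
    ((1 / 2 : ℂ) • 1 : 𝒜) ⋄ (I • A) = A ⋄ ((I / 2) • 1 : 𝒜) := by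
  rw [smul_one_diamond, diamond_smul_one, star_smul]
  simp only [star_half, star_I_div_two, star_I, smul_smul]
  match_scalars <;> ring

lemma I_smul_diamond_I_div_two (A : 𝒜) :
    (I • A) ⋄ ((I / 2) • 1 : 𝒜) = A ⋄ ((1 / 2 : ℂ) • 1 : 𝒜) := by
  rw [diamond_smul_one, diamond_smul_one, star_smul]
  simp only [star_half, star_I_div_two, star_I, smul_smul]
  match_scalars <;> ring_nf <;> simp only [I_sq] <;> ring

lemma half_diamond_I_div_two : ((1 / 2 : ℂ) • 1 : 𝒜) ⋄ ((I / 2) • 1 : 𝒜) = (I / 2) • 1 := by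
  rw [smul_one_diamond, star_smul, star_one]
  simp only [star_half, star_I_div_two, smul_smul]
  match_scalars
  ring

namespace IsDiamondDerivation

variable {Φ : 𝒜 → 𝒜}

lemma map_I_div_two_eq_I_smul_map_half (hΦ : IsDiamondDerivation Φ)
    (h1 : IsSelfAdjoint (Φ ((1 / 2 : ℂ) • 1))) (h2 : IsSelfAdjoint (Φ ((I / 2) • 1))) :
    Φ ((I / 2) • 1) = I • Φ ((1 / 2 : ℂ) • 1) := by
  have := hΦ ((1 / 2 : ℂ) • 1) ((I / 2) • 1)
  rw [half_diamond_I_div_two, diamond_smul_one, smul_one_diamond, h1.star_eq, h2.star_eq] at this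
  rw [this]
  simp only [star_half, star_I_div_two]
  match_scalars <;> ring

lemma map_half_eq_zero (hΦ : IsDiamondDerivation Φ)
    (h1 : IsSelfAdjoint (Φ ((1 / 2 : ℂ) • 1))) (h2 : IsSelfAdjoint (Φ ((I / 2) • 1))) :
    Φ ((1 / 2 : ℂ) • 1) = 0 := by
  have h := h2.star_eq
  rw [hΦ.map_I_div_two_eq_I_smul_map_half h1 h2, star_smul, h1.star_eq, star_I, neg_smul] at h
  exact eq_zero_of_I_smul_eq_neg h.symm

lemma map_I_smul (hΦ : IsDiamondDerivation Φ)
    (h1 : IsSelfAdjoint (Φ ((1 / 2 : ℂ) • 1))) (h2 : IsSelfAdjoint (Φ ((I / 2) • 1))) (A : 𝒜) :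
    Φ (I • A) = I • Φ A := by
  have hP := hΦ.map_half_eq_zero h1 h2
  have hQ : Φ ((I / 2) • 1) = 0 := by
    rw [hΦ.map_I_div_two_eq_I_smul_map_half h1 h2, hP, smul_zero]
  have E₁ : ((1 / 2 : ℂ) • 1 : 𝒜) ⋄ Φ (I • A) = Φ A ⋄ ((I / 2) • 1 : 𝒜) := by
    rw [← hΦ.map_diamond_of_map_left_eq_zero hP, half_diamond_I_smul,
      hΦ.map_diamond_of_map_right_eq_zero hQ]
  have E₂ : Φ (I • A) ⋄ ((I / 2) • 1 : 𝒜) = Φ A ⋄ ((1 / 2 : ℂ) • 1 : 𝒜) := by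
    rw [← hΦ.map_diamond_of_map_right_eq_zero hQ, I_smul_diamond_I_div_two,
      hΦ.map_diamond_of_map_right_eq_zero hP]
  rw [smul_one_diamond, diamond_smul_one] at E₁
  rw [diamond_smul_one, diamond_smul_one] at E₂
  simp only [star_half, star_I_div_two] at E₁ E₂
  linear_combination (norm := match_scalars <;> ring_nf <;> simp [I_sq]) E₁ - I • E₂

end IsDiamondDerivation

end ComplexStarAlgebra

/-- If `Φ` is a nonlinear `⋄`-derivation on a unital ∗-algebra over `ℂ`
with `Φ(I/2)` and `Φ(iI/2)` self-adjoint, then `Φ(iA) = iΦ(A)` for every `A`. -/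
theorem stmt4 {𝒜 : Type*} [Ring 𝒜] [Algebra ℂ 𝒜] [StarRing 𝒜] [StarModule ℂ 𝒜]
    (Φ : 𝒜 → 𝒜)
    (hΦ : ∀ A B : 𝒜, Φ (star A * B - star B * A) =
      (star (Φ A) * B - star B * Φ A) + (star A * Φ B - star (Φ B) * A))
    (h1 : star (Φ (((1 : ℂ)/2) • (1 : 𝒜))) = Φ (((1 : ℂ)/2) • (1 : 𝒜)))
    (h2 : star (Φ ((Complex.I/2) • (1 : 𝒜))) = Φ ((Complex.I/2) • (1 : 𝒜))) :
    ∀ A : 𝒜, Φ (Complex.I • A) = Complex.I • Φ A :=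
  IsDiamondDerivation.map_I_smul hΦ h1 h2
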